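/- Let λ₁, …, λₙ be real numbers with Σλᵢ² = S, where S ≥ 6. For any two distinct indices i, j, setting F = Σ_{p,q} (λ_p − λ_q)²(1 + λ_pλ_q)², one has λⱼ² − 4λᵢλⱼ ≤ S + 4 + [(24/5 − 16/S) F]^{1/3}. -/
import Mathlib

private lemma Lmu1 (t u : ℝ) (ht : 0 ≤ t) (hu : 0 ≤ u) (h4 : t ≤ 4*u) :
    0 ≤ 48*u^2*(2*t+2*u+1) + (5*t^4-60*t^3*u+288*t^2*u^2-224*t*u^3+48*u^4) - 86*u*(4*u-t)*t := by
  have hquad : (0:ℝ) ≤ 1609*t^2 - 1348*t*u + 288*u^2 := by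
    nlinarith [sq_nonneg (1609*t - 674*u), sq_nonneg u]
  have hA : (86*t^2-248*t*u+96*u^2)^2
      ≤ 192*(5*t^4-60*t^3*u+288*t^2*u^2-224*t*u^3+48*u^4) := by
    nlinarith [mul_nonneg (mul_nonneg ht (sub_nonneg.2 h4)) hquad]
  have hq : (0:ℝ) ≤ 5*t^4-60*t^3*u+288*t^2*u^2-224*t*u^3+48*u^4 := by
    nlinarith [hA, sq_nonneg (86*t^2-248*t*u+96*u^2)]
  rcases le_or_gt 0 (86*t^2-248*t*u+96*u^2) with h | h
  · nlinarith [mul_nonneg hu h, sq_nonneg u, hq]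
  · have hX : (0:ℝ) ≤ (5*t^4-60*t^3*u+288*t^2*u^2-224*t*u^3+48*u^4) + 48*u^2 := by
      nlinarith [hq, sq_nonneg u]
    have hsq : (u*(86*t^2-248*t*u+96*u^2))^2
        ≤ ((5*t^4-60*t^3*u+288*t^2*u^2-224*t*u^3+48*u^4) + 48*u^2)^2 := by
      nlinarith [sq_nonneg ((5*t^4-60*t^3*u+288*t^2*u^2-224*t*u^3+48*u^4) - 48*u^2),
        mul_nonneg (sq_nonneg u) (sub_nonneg.2 hA)]
    nlinarith [hsq, hX]

private lemma Lsig (t u : ℝ) (ht : 0 ≤ t) (hu : 0 ≤ u) (h4 : t ≤ 4*u) :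
    0 ≤ 6*(48*u^2*(2*t+2*u+1) + (5*t^4-60*t^3*u+288*t^2*u^2-224*t*u^3+48*u^4) - 86*u*(4*u-t)*t)
      + 86*u*(4*u-t)*(t^2+(1+u)^2) - 160*u^2*(t+1+u)^2 := by
  have h2 : (0:ℝ) ≤ 472*u^2 - 86*t*u := by
    nlinarith [mul_nonneg hu (sub_nonneg.2 h4), sq_nonneg u]
  have h4p : (0:ℝ) ≤ 30*t^4-446*t^3*u+1912*t^2*u^2-1750*t*u^3+472*u^4 := by
    nlinarith [sq_nonneg (30*t^2-223*t*u+114*u^2), sq_nonneg (791*t*u-828*u^2), sq_nonneg (u^2)]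
  have hq2 : (0:ℝ) ≤ 6092*t^2-9606*t*u+4248*u^2 := by
    nlinarith [sq_nonneg (6092*t-4803*u), sq_nonneg u]
  have hcub : (0:ℝ) ≤ 10320*t^3+97472*t^2*u-153696*t*u^2+67968*u^3 := by
    nlinarith [mul_nonneg hu hq2, mul_nonneg (mul_nonneg ht ht) ht]
  have hB : (516*t^2*u-1980*t*u^2+944*u^3)^2
      ≤ 4*(30*t^4-446*t^3*u+1912*t^2*u^2-1750*t*u^3+472*u^4)*(472*u^2-86*t*u) := by
    nlinarith [mul_nonneg (mul_nonneg (mul_nonneg ht (sub_nonneg.2 h4)) hu) hcub]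
  have hsplit : 6*(48*u^2*(2*t+2*u+1) + (5*t^4-60*t^3*u+288*t^2*u^2-224*t*u^3+48*u^4) - 86*u*(4*u-t)*t)
      + 86*u*(4*u-t)*(t^2+(1+u)^2) - 160*u^2*(t+1+u)^2
      = (30*t^4-446*t^3*u+1912*t^2*u^2-1750*t*u^3+472*u^4)
        + (516*t^2*u-1980*t*u^2+944*u^3) + (472*u^2-86*t*u) := by ring
  rw [hsplit]
  rcases le_or_gt 0 (516*t^2*u-1980*t*u^2+944*u^3) with h | h
  · linarith [h2, h4p]
  · have hX : (0:ℝ) ≤ (30*t^4-446*t^3*u+1912*t^2*u^2-1750*t*u^3+472*u^4) + (472*u^2-86*t*u) :=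
      add_nonneg h4p h2
    have hsq : (516*t^2*u-1980*t*u^2+944*u^3)^2
        ≤ ((30*t^4-446*t^3*u+1912*t^2*u^2-1750*t*u^3+472*u^4) + (472*u^2-86*t*u))^2 := by
      nlinarith [sq_nonneg ((30*t^4-446*t^3*u+1912*t^2*u^2-1750*t*u^3+472*u^4) - (472*u^2-86*t*u)), hB]
    nlinarith [hsq, hX]

private lemma key3 (t u s : ℝ) (ht : 0 < t) (hu : 0 < u) (hs6 : 6 ≤ s)
    (hst : t^2+(1+u)^2 ≤ s*t) :
    s*t*(4*u-t)^3 ≤ 16/5*(3*s-10)*(u^2*(t+1+u)^2) := by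
  rcases le_or_gt t (4*u) with h4 | h4
  · have hm := Lmu1 t u ht.le hu.le h4
    have hsg := Lsig t u ht.le hu.le h4
    have h1 : 0 ≤ (48*u^2*(2*t+2*u+1) + (5*t^4-60*t^3*u+288*t^2*u^2-224*t*u^3+48*u^4)
        - 86*u*(4*u-t)*t) * (s-6) := mul_nonneg hm (by linarith)
    have h2 : 0 ≤ (86*u*(4*u-t)) * (s*t - (t^2+(1+u)^2)) :=
      mul_nonneg (by nlinarith [mul_nonneg hu.le (sub_nonneg.2 h4)]) (sub_nonneg.2 hst)
    nlinarith [h1, h2, hsg]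
  · have h1 : (4*u-t)^3 ≤ 0 := by nlinarith [sq_nonneg (4*u-t)]
    have h2 : (0:ℝ) ≤ s*t := by positivity
    have hL : s*t*(4*u-t)^3 ≤ 0 := mul_nonpos_of_nonneg_of_nonpos h2 h1
    have hR : (0:ℝ) ≤ 16/5*(3*s-10)*(u^2*(t+1+u)^2) := by
      have h3 : (0:ℝ) ≤ 3*s-10 := by linarith
      positivity
    linarith

private lemma key (x y s : ℝ) (hs6 : 6 ≤ s) (hxy : x^2+y^2 ≤ s) :
    s*(-(x^2+4*x*y+4))^3 ≤ 16/5*(3*s-10)*((x-y)^2*(1+x*y)^2) := by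
  rcases le_or_gt 0 (x^2+4*x*y+4) with hA | hA
  · have h1 : (-(x^2+4*x*y+4))^3 ≤ 0 := by nlinarith [sq_nonneg (x^2+4*x*y+4)]
    have hs0 : (0:ℝ) ≤ s := by linarith
    have hL : s*(-(x^2+4*x*y+4))^3 ≤ 0 := mul_nonpos_of_nonneg_of_nonpos hs0 h1
    have hR : (0:ℝ) ≤ 16/5*(3*s-10)*((x-y)^2*(1+x*y)^2) := by
      have h3 : (0:ℝ) ≤ 3*s-10 := by linarith
      positivity
    linarith
  · have hx : x ≠ 0 := by
      rintro rfl
      nlinarith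
    have hx2 : 0 < x^2 := by positivity
    have hu : 0 < -(1+x*y) := by nlinarith [sq_nonneg x]
    have hst' : (x^2)^2 + (1+(-(1+x*y)))^2 ≤ s*(x^2) := by
      nlinarith [mul_nonneg (sq_nonneg x) (sub_nonneg.2 hxy)]
    have h3 := key3 (x^2) (-(1+x*y)) s hx2 hu hs6 hst'
    refine le_of_mul_le_mul_right ?_ hx2
    calc s*(-(x^2+4*x*y+4))^3 * x^2
        = s*(x^2)*(4*(-(1+x*y))-x^2)^3 := by ring
      _ ≤ 16/5*(3*s-10)*((-(1+x*y))^2*((x^2)+1+(-(1+x*y)))^2) := h3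
      _ = 16/5*(3*s-10)*((x-y)^2*(1+x*y)^2) * x^2 := by ring

open Finset in
theorem stmt12 (n : ℕ) (l : Fin n → ℝ) (S F : ℝ)
    (hS : S = ∑ i, l i ^ 2) (hS6 : 6 ≤ S)
    (hF : F = ∑ p, ∑ q, (l p - l q)^2 * (1 + l p * l q)^2)
    (i j : Fin n) (hij : i ≠ j) :
    l j ^ 2 - 4*(l i)*(l j) ≤ S + 4 + ((24/5 - 16/S) * F) ^ ((1:ℝ)/3) := by
  have hS0 : (0:ℝ) < S := by linarith
  -- a² + b² ≤ S
  have hab : l i ^ 2 + l j ^ 2 ≤ S := by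
    rw [hS]
    have hsub : ({i,j} : Finset (Fin n)) ⊆ univ := subset_univ _
    have h := Finset.sum_le_sum_of_subset_of_nonneg hsub
      (fun k _ _ => sq_nonneg (l k))
    rwa [Finset.sum_pair hij] at h
  -- F ≥ 2B
  have hterm : ∀ p q : Fin n, (0:ℝ) ≤ (l p - l q)^2*(1+l p*l q)^2 :=
    fun p q => mul_nonneg (sq_nonneg _) (sq_nonneg _)
  have hF0 : (0:ℝ) ≤ F := by
    rw [hF]
    exact Finset.sum_nonneg fun p _ => Finset.sum_nonneg fun q _ => hterm p q
  have hF2 : 2*((l i - l j)^2*(1+l i*l j)^2) ≤ F := by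
    rw [hF]
    have hrow : ∀ p : Fin n, (0:ℝ) ≤ ∑ q, (l p - l q)^2*(1+l p*l q)^2 :=
      fun p => Finset.sum_nonneg fun q _ => hterm p q
    have h1 : (∑ q, (l i - l q)^2*(1+l i*l q)^2) + (∑ q, (l j - l q)^2*(1+l j*l q)^2)
        ≤ ∑ p, ∑ q, (l p - l q)^2*(1+l p*l q)^2 := by
      have hsub : ({i,j} : Finset (Fin n)) ⊆ univ := subset_univ _
      have h := Finset.sum_le_sum_of_subset_of_nonneg hsub (fun k _ _ => hrow k)
      rwa [Finset.sum_pair hij] at h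
    have h2 : (l i - l j)^2*(1+l i*l j)^2 ≤ ∑ q, (l i - l q)^2*(1+l i*l q)^2 :=
      Finset.single_le_sum (fun q _ => hterm i q) (mem_univ j)
    have h3 : (l j - l i)^2*(1+l j*l i)^2 ≤ ∑ q, (l j - l q)^2*(1+l j*l q)^2 :=
      Finset.single_le_sum (fun q _ => hterm j q) (mem_univ i)
    nlinarith [h1, h2, h3]
  have hcoef : (0:ℝ) ≤ 24/5 - 16/S := by
    have h16 : 16/S ≤ 16/6 := div_le_div_of_nonneg_left (by norm_num) (by norm_num) hS6
    linarith
  have hR0 : (0:ℝ) ≤ (24/5 - 16/S)*F := mul_nonneg hcoef hF0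
  have hmain : l j ^ 2 - 4*(l i)*(l j) - S - 4 ≤ -((l i)^2 + 4*(l i)*(l j) + 4) := by
    nlinarith [hab]
  rcases le_or_gt (-((l i)^2 + 4*(l i)*(l j) + 4)) 0 with hA | hA
  · have hrp : (0:ℝ) ≤ ((24/5 - 16/S)*F) ^ ((1:ℝ)/3) := Real.rpow_nonneg hR0 _
    linarith
  · have hkey := key (l i) (l j) S hS6 hab
    have hcube : (-((l i)^2 + 4*(l i)*(l j) + 4))^3 ≤ (24/5 - 16/S)*F := by
      have hSR : S*((24/5 - 16/S)*F) = (24*S/5 - 16)*F := by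
        field_simp
      have h5 : 16/5*(3*S-10)*((l i - l j)^2*(1+l i*l j)^2) ≤ S*((24/5 - 16/S)*F) := by
        rw [hSR]
        have h6 : (0:ℝ) ≤ 24*S/5 - 16 := by linarith
        nlinarith [mul_nonneg h6 (sub_nonneg.2 hF2)]
      have h7 : S*(-((l i)^2 + 4*(l i)*(l j) + 4))^3 ≤ S*((24/5 - 16/S)*F) := by
        calc S*(-((l i)^2 + 4*(l i)*(l j) + 4))^3
            = S*(-((l i)^2+4*(l i)*(l j)+4))^3 := by ring
          _ ≤ 16/5*(3*S-10)*((l i - l j)^2*(1+l i*l j)^2) := hkey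
          _ ≤ S*((24/5 - 16/S)*F) := h5
      exact le_of_mul_le_mul_left h7 hS0
    have hc0 : (0:ℝ) ≤ -((l i)^2 + 4*(l i)*(l j) + 4) := hA.le
    have heq : -((l i)^2 + 4*(l i)*(l j) + 4)
        = ((-((l i)^2 + 4*(l i)*(l j) + 4))^3 : ℝ) ^ ((1:ℝ)/3) := by
      rw [← Real.rpow_natCast (-((l i)^2 + 4*(l i)*(l j) + 4)) 3,
        ← Real.rpow_mul hc0]
      norm_num
    have hmono : ((-((l i)^2 + 4*(l i)*(l j) + 4))^3 : ℝ) ^ ((1:ℝ)/3)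
        ≤ ((24/5 - 16/S)*F) ^ ((1:ℝ)/3) :=
      Real.rpow_le_rpow (by positivity) hcube (by norm_num)
    linarith [heq.le.trans hmono, hmain]
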